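/- For the one-dimensional sine-Gordon equation u_tt − u_xx + sin u = 0, the breather function u(x,t) = 4 arctan(c⁻¹ sin(cκt) sech(κx)) with κ = 1/√(1+c²) and c ≠ 0 is an exact solution. -/

import Mathlib

open Real

/-- first t-derivative -/
lemma breatherL1 (b k ch : ℝ) (hch : 0 < ch) (t : ℝ) :
    HasDerivAt (fun s => 4 * Real.arctan (b * Real.sin (k * s) / ch))
      (4 * b * k * Real.cos (k * t) * ch / (ch ^ 2 + b ^ 2 * Real.sin (k * t) ^ 2)) t := by
  have hlin : HasDerivAt (fun s : ℝ => k * s) k t := by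
    simpa using (hasDerivAt_id t).const_mul k
  have hsin : HasDerivAt (fun s => Real.sin (k * s)) (Real.cos (k * t) * k) t :=
    (Real.hasDerivAt_sin (k * t)).comp t hlin
  have hinner : HasDerivAt (fun s => b * Real.sin (k * s) / ch)
      (b * (Real.cos (k * t) * k) / ch) t := (hsin.const_mul b).div_const ch
  have h := (hinner.arctan).const_mul 4
  refine h.congr_deriv ?_
  have hE : ch ^ 2 + b ^ 2 * Real.sin (k * t) ^ 2 > 0 := by positivity
  field_simp

/-- second t-derivative -/
lemma breatherL2 (b k ch : ℝ) (hch : 0 < ch) (t : ℝ) :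
    HasDerivAt (fun s => 4 * b * k * Real.cos (k * s) * ch / (ch ^ 2 + b ^ 2 * Real.sin (k * s) ^ 2))
      (-(4 * b * k ^ 2 * Real.sin (k * t) * ch *
          ((ch ^ 2 + b ^ 2 * Real.sin (k * t) ^ 2) + 2 * b ^ 2 * Real.cos (k * t) ^ 2)) /
        (ch ^ 2 + b ^ 2 * Real.sin (k * t) ^ 2) ^ 2) t := by
  have hlin : HasDerivAt (fun s : ℝ => k * s) k t := by
    simpa using (hasDerivAt_id t).const_mul k
  have hsin : HasDerivAt (fun s => Real.sin (k * s)) (Real.cos (k * t) * k) t :=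
    (Real.hasDerivAt_sin (k * t)).comp t hlin
  have hcos : HasDerivAt (fun s => Real.cos (k * s)) (-Real.sin (k * t) * k) t :=
    (Real.hasDerivAt_cos (k * t)).comp t hlin
  have hN : HasDerivAt (fun s => 4 * b * k * Real.cos (k * s) * ch)
      ((-Real.sin (k * t) * k) * (4 * b * k) * ch) t := by
    simpa [mul_comm, mul_assoc, mul_left_comm] using (hcos.const_mul (4 * b * k)).mul_const ch
  have hD : HasDerivAt (fun s => ch ^ 2 + b ^ 2 * Real.sin (k * s) ^ 2)
      (b ^ 2 * (2 * Real.sin (k * t) ^ 1 * (Real.cos (k * t) * k))) t := by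
    exact ((hsin.pow 2).const_mul (b ^ 2)).const_add (ch ^ 2)
  have hE : (0:ℝ) < ch ^ 2 + b ^ 2 * Real.sin (k * t) ^ 2 := by positivity
  have h := hN.div hD hE.ne'
  refine h.congr_deriv ?_
  field_simp
  ring

/-- first x-derivative -/
lemma breatherL3 (a k : ℝ) (x : ℝ) :
    HasDerivAt (fun y => 4 * Real.arctan (a / Real.cosh (k * y)))
      (-(4 * a * k * Real.sinh (k * x)) / (Real.cosh (k * x) ^ 2 + a ^ 2)) x := by
  have hlin : HasDerivAt (fun y : ℝ => k * y) k x := by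
    simpa using (hasDerivAt_id x).const_mul k
  have hcosh : HasDerivAt (fun y => Real.cosh (k * y)) (Real.sinh (k * x) * k) x :=
    (Real.hasDerivAt_cosh (k * x)).comp x hlin
  have hch : (0:ℝ) < Real.cosh (k * x) := Real.cosh_pos _
  have hinner : HasDerivAt (fun y => a / Real.cosh (k * y))
      ((0 * Real.cosh (k * x) - a * (Real.sinh (k * x) * k)) / Real.cosh (k * x) ^ 2) x :=
    (hasDerivAt_const x a).div hcosh hch.ne'
  have h := (hinner.arctan).const_mul 4
  refine h.congr_deriv ?_
  have hE : (0:ℝ) < Real.cosh (k * x) ^ 2 + a ^ 2 := by positivity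
  field_simp
  ring

/-- second x-derivative -/
lemma breatherL4 (a k : ℝ) (x : ℝ) :
    HasDerivAt (fun y => -(4 * a * k * Real.sinh (k * y)) / (Real.cosh (k * y) ^ 2 + a ^ 2))
      (-(4 * a * k ^ 2 * Real.cosh (k * x) *
          ((Real.cosh (k * x) ^ 2 + a ^ 2) - 2 * Real.sinh (k * x) ^ 2)) /
        (Real.cosh (k * x) ^ 2 + a ^ 2) ^ 2) x := by
  have hlin : HasDerivAt (fun y : ℝ => k * y) k x := by
    simpa using (hasDerivAt_id x).const_mul k
  have hsinh : HasDerivAt (fun y => Real.sinh (k * y)) (Real.cosh (k * x) * k) x :=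
    (Real.hasDerivAt_sinh (k * x)).comp x hlin
  have hcosh : HasDerivAt (fun y => Real.cosh (k * y)) (Real.sinh (k * x) * k) x :=
    (Real.hasDerivAt_cosh (k * x)).comp x hlin
  have hN : HasDerivAt (fun y => -(4 * a * k * Real.sinh (k * y)))
      (-(4 * a * k * (Real.cosh (k * x) * k))) x := by
    simpa [mul_comm, mul_assoc, mul_left_comm] using (hsinh.const_mul (4 * a * k)).fun_neg
  have hD : HasDerivAt (fun y => Real.cosh (k * y) ^ 2 + a ^ 2)
      (2 * Real.cosh (k * x) ^ 1 * (Real.sinh (k * x) * k)) x := by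
    exact (hcosh.pow 2).add_const (a ^ 2)
  have hch : (0:ℝ) < Real.cosh (k * x) := Real.cosh_pos _
  have hE : (0:ℝ) < Real.cosh (k * x) ^ 2 + a ^ 2 := by positivity
  have h := hN.div hD hE.ne'
  refine h.congr_deriv ?_
  field_simp
  ring

lemma breatherLsin (f : ℝ) :
    Real.sin (4 * Real.arctan f) = 4 * f * (1 - f ^ 2) / (1 + f ^ 2) ^ 2 := by
  have h4 : (4:ℝ) * Real.arctan f = 2 * (2 * Real.arctan f) := by ring
  have h0 : (0:ℝ) < 1 + f ^ 2 := by positivity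
  have hs : Real.sqrt (1 + f ^ 2) ^ 2 = 1 + f ^ 2 := Real.sq_sqrt h0.le
  have hs0 : Real.sqrt (1 + f ^ 2) ≠ 0 := by positivity
  rw [h4, Real.sin_two_mul, Real.cos_two_mul, Real.sin_two_mul, Real.sin_arctan,
    Real.cos_arctan]
  field_simp
  rw [show Real.sqrt (1 + f ^ 2) ^ 4 = (Real.sqrt (1 + f ^ 2) ^ 2) ^ 2 by ring, hs]
  ring

theorem breather_solution (c : ℝ) (hc : c ≠ 0) (κ : ℝ) (hκ : κ = 1 / Real.sqrt (1 + c^2))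
    (u : ℝ → ℝ → ℝ)
    (hu : ∀ x t : ℝ, u x t = 4 * Real.arctan (c⁻¹ * Real.sin (c * κ * t) / Real.cosh (κ * x))) :
    ContDiff ℝ (⊤ : ℕ∞) (fun p : ℝ × ℝ => u p.1 p.2) ∧
    ∀ x t : ℝ,
      deriv (deriv (fun s => u x s)) t - deriv (deriv (fun y => u y t)) x
        + Real.sin (u x t) = 0 := by
  have h1c : (0:ℝ) < 1 + c ^ 2 := by positivity
  have hκ2 : κ ^ 2 = 1 / (1 + c ^ 2) := by
    rw [hκ, div_pow, one_pow, Real.sq_sqrt h1c.le]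
  constructor
  · have heq : (fun p : ℝ × ℝ => u p.1 p.2)
        = fun p : ℝ × ℝ => 4 * Real.arctan (c⁻¹ * Real.sin (c * κ * p.2) / Real.cosh (κ * p.1)) :=
      funext fun p => hu p.1 p.2
    rw [heq]
    have hinner : ContDiff ℝ (⊤ : ℕ∞)
        (fun p : ℝ × ℝ => c⁻¹ * Real.sin (c * κ * p.2) / Real.cosh (κ * p.1)) := by
      apply ContDiff.div
      · exact contDiff_const.mul (Real.contDiff_sin.comp (contDiff_const.mul contDiff_snd))
      · exact Real.contDiff_cosh.comp (contDiff_const.mul contDiff_fst)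
      · exact fun p => (Real.cosh_pos _).ne'
    exact contDiff_const.mul (Real.contDiff_arctan.comp hinner)
  · intro x t
    have hch : (0:ℝ) < Real.cosh (κ * x) := Real.cosh_pos _
    -- t derivatives
    have hut : (fun s => u x s)
        = fun s => 4 * Real.arctan (c⁻¹ * Real.sin (c * κ * s) / Real.cosh (κ * x)) :=
      funext fun s => hu x s
    have hd1 : deriv (fun s => u x s)
        = fun s => 4 * c⁻¹ * (c * κ) * Real.cos (c * κ * s) * Real.cosh (κ * x) /
            (Real.cosh (κ * x) ^ 2 + c⁻¹ ^ 2 * Real.sin (c * κ * s) ^ 2) := by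
      rw [hut]
      exact funext fun s => (breatherL1 c⁻¹ (c * κ) (Real.cosh (κ * x)) hch s).deriv
    have hd2 : deriv (deriv (fun s => u x s)) t
        = -(4 * c⁻¹ * (c * κ) ^ 2 * Real.sin (c * κ * t) * Real.cosh (κ * x) *
            ((Real.cosh (κ * x) ^ 2 + c⁻¹ ^ 2 * Real.sin (c * κ * t) ^ 2)
              + 2 * c⁻¹ ^ 2 * Real.cos (c * κ * t) ^ 2)) /
          (Real.cosh (κ * x) ^ 2 + c⁻¹ ^ 2 * Real.sin (c * κ * t) ^ 2) ^ 2 := by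
      rw [hd1]
      exact (breatherL2 c⁻¹ (c * κ) (Real.cosh (κ * x)) hch t).deriv
    -- x derivatives
    have hux : (fun y => u y t)
        = fun y => 4 * Real.arctan ((c⁻¹ * Real.sin (c * κ * t)) / Real.cosh (κ * y)) := by
      funext y
      rw [hu y t]
    have he1 : deriv (fun y => u y t)
        = fun y => -(4 * (c⁻¹ * Real.sin (c * κ * t)) * κ * Real.sinh (κ * y)) /
            (Real.cosh (κ * y) ^ 2 + (c⁻¹ * Real.sin (c * κ * t)) ^ 2) := by
      rw [hux]
      exact funext fun y => (breatherL3 (c⁻¹ * Real.sin (c * κ * t)) κ y).deriv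
    have he2 : deriv (deriv (fun y => u y t)) x
        = -(4 * (c⁻¹ * Real.sin (c * κ * t)) * κ ^ 2 * Real.cosh (κ * x) *
            ((Real.cosh (κ * x) ^ 2 + (c⁻¹ * Real.sin (c * κ * t)) ^ 2)
              - 2 * Real.sinh (κ * x) ^ 2)) /
          (Real.cosh (κ * x) ^ 2 + (c⁻¹ * Real.sin (c * κ * t)) ^ 2) ^ 2 := by
      rw [he1]
      exact (breatherL4 (c⁻¹ * Real.sin (c * κ * t)) κ x).deriv
    rw [hd2, he2, hu x t, breatherLsin]
    have hco2 : Real.cos (c * κ * t) ^ 2 = 1 - Real.sin (c * κ * t) ^ 2 := by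
      nlinarith [Real.sin_sq_add_cos_sq (c * κ * t)]
    have hsh2 : Real.sinh (κ * x) ^ 2 = Real.cosh (κ * x) ^ 2 - 1 := by
      nlinarith [Real.cosh_sq (κ * x)]
    rw [hco2, hsh2, mul_pow, hκ2]
    have hE1 : (0:ℝ) < Real.cosh (κ * x) ^ 2 + c⁻¹ ^ 2 * Real.sin (c * κ * t) ^ 2 := by
      positivity
    have hE2 : (0:ℝ) < Real.cosh (κ * x) ^ 2 + (c⁻¹ * Real.sin (c * κ * t)) ^ 2 := by
      positivity
    have hE3 : (0:ℝ) < 1 + (c⁻¹ * Real.sin (c * κ * t) / Real.cosh (κ * x)) ^ 2 := by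
      positivity
    field_simp
    ring
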